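/- arXiv:2302.13103 — 4 statements merged into one kernel-verified Lean document; each statement's English description precedes it below -/
import Mathlib

section
/- Two complex-valued Γ-periodic potentials V, Y : W → ℂ are Floquet isospectral if and only if det(𝒟_V(z) − λI) = det(𝒟_Y(z) − λI) for every z ∈ (ℂ∖{0})^d and every λ ∈ ℂ. -/
open scoped BigOperators

noncomputable section

namespace DPSO

/-- The Floquet matrix `𝒟_V(z)` of the discrete periodic Schrödinger operator, indexed by the
fundamental domain `W = ∏ i, ZMod (q i)`. -/
def floquetMat {d : ℕ} (q : Fin d → ℕ) [∀ i, NeZero (q i)]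
    (V : (∀ i, ZMod (q i)) → ℂ) (z : Fin d → ℂ) :
    Matrix (∀ i, ZMod (q i)) (∀ i, ZMod (q i)) ℂ :=
  fun n n' =>
    (∑ j : Fin d,
      ((if n' = n + Pi.single j 1 then (if (n j).val = q j - 1 then z j else 1) else 0)
        + (if n' = n - Pi.single j 1 then (if (n j).val = 0 then (z j)⁻¹ else 1) else 0)))
    + (if n' = n then V n else 0)

/-- Two `Γ`-periodic potentials are Floquet isospectral if for every real quasimomentum `k`
the Floquet matrices have the same characteristic polynomial. -/
def FloquetIso {d : ℕ} (q : Fin d → ℕ) [∀ i, NeZero (q i)]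
    (V Y : (∀ i, ZMod (q i)) → ℂ) : Prop :=
  ∀ k : Fin d → ℝ,
    (floquetMat q V (fun j => Complex.exp (2 * Real.pi * Complex.I * (k j)))).charpoly
      = (floquetMat q Y (fun j => Complex.exp (2 * Real.pi * Complex.I * (k j)))).charpoly

/-- Two `Γ`-periodic potentials are Fermi isospectral if for some `λ₀` their Fermi surfaces
(inside `(ℂ∖{0})^d`) coincide. -/
def FermiIso {d : ℕ} (q : Fin d → ℕ) [∀ i, NeZero (q i)]
    (V Y : (∀ i, ZMod (q i)) → ℂ) : Prop :=
  ∃ lam : ℂ,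
    {z : Fin d → ℂ | (∀ j, z j ≠ 0) ∧ (floquetMat q V z - lam • 1).det = 0}
      = {z : Fin d → ℂ | (∀ j, z j ≠ 0) ∧ (floquetMat q Y z - lam • 1).det = 0}

/-- The offset (start index) of the `j`-th consecutive block of sizes `ds 0, …, ds (r-1)`. -/
def blockOffset {r : ℕ} (ds : Fin r → ℕ) (j : Fin r) : ℕ :=
  ∑ m ∈ Finset.univ.filter (fun m => m < j), ds m

lemma blockOffset_add_le {r : ℕ} (ds : Fin r → ℕ) (j : Fin r) :
    blockOffset ds j + ds j ≤ ∑ m, ds m := by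
  have hj : j ∉ Finset.univ.filter (fun m : Fin r => m < j) := by simp
  have h : blockOffset ds j + ds j
      = ∑ m ∈ insert j (Finset.univ.filter (fun m : Fin r => m < j)), ds m := by
    rw [Finset.sum_insert hj, Nat.add_comm, blockOffset]
  rw [h]
  exact Finset.sum_le_sum_of_subset (Finset.subset_univ _)

/-- The embedding of the index set of the `j`-th block into `Fin d`. -/
def blockEmb {d r : ℕ} (ds : Fin r → ℕ) (hsum : ∑ m, ds m = d) (j : Fin r)
    (b : Fin (ds j)) : Fin d :=
  ⟨blockOffset ds j + b.val, by
    have h1 := blockOffset_add_le ds j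
    have h2 := b.isLt
    omega⟩

/-- `V` is `(d₁,…,d_r)` separable: it is a sum of functions, the `j`-th of which depends only
on the coordinates in the `j`-th block. -/
def IsSeparable {d r : ℕ} (q : Fin d → ℕ) (ds : Fin r → ℕ) (hsum : ∑ m, ds m = d)
    (V : (∀ i, ZMod (q i)) → ℂ) : Prop :=
  ∃ F : ∀ j : Fin r, ((∀ b : Fin (ds j), ZMod (q (blockEmb ds hsum j b))) → ℂ),
    ∀ n, V n = ∑ j, F j (fun b => n (blockEmb ds hsum j b))

/-- The discrete Fourier transform of `V`. -/
def dft {d : ℕ} (q : Fin d → ℕ) [∀ i, NeZero (q i)] (V : (∀ i, ZMod (q i)) → ℂ)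
    (l : ∀ i, ZMod (q i)) : ℂ :=
  (1 / ∏ i, (q i : ℂ)) * ∑ n : ∀ i, ZMod (q i), V n *
    Complex.exp (-(2 * Real.pi * Complex.I) *
      ∑ j, ((l j).val : ℂ) * ((n j).val : ℂ) / (q j : ℂ))

/-- `ρ^j_m = e^{2πi m/q_j}`. -/
def rho {d : ℕ} (q : Fin d → ℕ) (j : Fin d) (m : ℕ) : ℂ :=
  Complex.exp (2 * Real.pi * Complex.I * (m : ℂ) / (q j : ℂ))

/-- The average `[V]` of a potential. -/
def avg {d : ℕ} (q : Fin d → ℕ) [∀ i, NeZero (q i)] (V : (∀ i, ZMod (q i)) → ℂ) : ℂ :=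
  (1 / ∏ i, (q i : ℂ)) * ∑ n, V n

/-- The diagonal matrix `A(z)`. -/
def diagA {d : ℕ} (q : Fin d → ℕ) [∀ i, NeZero (q i)] (z : Fin d → ℂ) :
    Matrix (∀ i, ZMod (q i)) (∀ i, ZMod (q i)) ℂ :=
  Matrix.diagonal (fun n => ∑ j, (rho q j ((n j).val) * z j + (rho q j ((n j).val) * z j)⁻¹))

/-- The matrix `B_V` with entries `V̂(n - n')`. -/
def matB {d : ℕ} (q : Fin d → ℕ) [∀ i, NeZero (q i)] (V : (∀ i, ZMod (q i)) → ℂ) :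
    Matrix (∀ i, ZMod (q i)) (∀ i, ZMod (q i)) ℂ :=
  fun n n' => dft q V (n - n')
end DPSO

/-!
For fixed `λ`, the map `z ↦ det (𝒟_V(z) - λ I)` is holomorphic on `(ℂ∖{0})^d`, because every
entry of `𝒟_V(z)` is a constant, some `z_j` or some `z_j⁻¹`. Floquet isospectrality says exactly
that the determinants for `V` and `Y` agree on the torus `|z_j| = 1`. Such an agreement spreads
to all of `(ℂ∖{0})^d` one coordinate at a time: in one variable, `w ↦ f (exp (2πiw))` is entire
and vanishes on `ℝ`, hence everywhere by the identity theorem.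
-/

open Complex Filter Topology
open scoped Real

section Calculus

variable {𝕜 E : Type*} [NontriviallyNormedField 𝕜] [NormedAddCommGroup E] [NormedSpace 𝕜 E]
  {x : E}

@[fun_prop]
theorem differentiableAt_ite_of_const {F : Type*} [NormedAddCommGroup F] [NormedSpace 𝕜 F]
    {p : Prop} [Decidable p] {f g : E → F}
    (hf : DifferentiableAt 𝕜 f x) (hg : DifferentiableAt 𝕜 g x) :
    DifferentiableAt 𝕜 (fun y => if p then f y else g y) x := by
  split_ifs <;> assumption

theorem DifferentiableAt.matrix_det {ι : Type*} [Fintype ι] [DecidableEq ι]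
    {M : E → Matrix ι ι 𝕜} (hM : ∀ i j, DifferentiableAt 𝕜 (fun y => M y i j) x) :
    DifferentiableAt 𝕜 (fun y => (M y).det) x := by
  simp only [Matrix.det_apply]
  fun_prop

end Calculus

theorem Matrix.det_sub_smul_one {R ι : Type*} [CommRing R] [Fintype ι] [DecidableEq ι]
    (M : Matrix ι ι R) (t : R) :
    (M - t • 1).det = (-1) ^ Fintype.card ι * M.charpoly.eval t := by
  rw [Matrix.eval_charpoly, ← Matrix.det_neg, neg_sub, Matrix.smul_one_eq_diagonal,
    Matrix.scalar_apply]

theorem Matrix.charpoly_eq_iff_forall_det_sub_smul_eq {R ι : Type*} [CommRing R] [IsDomain R]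
    [Infinite R] [Fintype ι] [DecidableEq ι] (M N : Matrix ι ι R) :
    M.charpoly = N.charpoly ↔ ∀ t : R, (M - t • 1).det = (N - t • 1).det := by
  simp only [Matrix.det_sub_smul_one, ((isUnit_neg_one (α := R)).pow _).mul_right_inj]
  exact ⟨fun h t => by rw [h], Polynomial.funext⟩

section IdentityTheorem

variable {E : Type*} [NormedAddCommGroup E] [NormedSpace ℂ E] [CompleteSpace E]

theorem eqOn_compl_zero_of_eq_on_circle {f g : ℂ → E} (hf : DifferentiableOn ℂ f {0}ᶜ)
    (hg : DifferentiableOn ℂ g {0}ᶜ)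
    (hfg : ∀ t : ℝ, f (exp (2 * π * I * t)) = g (exp (2 * π * I * t))) :
    Set.EqOn f g {0}ᶜ := by
  set e : ℂ → ℂ := fun w => exp (2 * π * I * w)
  have h_entire : ∀ {h : ℂ → E}, DifferentiableOn ℂ h {0}ᶜ → AnalyticOnNhd ℂ (h ∘ e) Set.univ :=
    fun hh => (hh.comp (by fun_prop) fun w _ => exp_ne_zero _).analyticOnNhd isOpen_univ
  have h_ofReal : Tendsto ((↑) : ℝ → ℂ) (𝓝[≠] 0) (𝓝[≠] 0) :=
    tendsto_nhdsWithin_of_tendsto_nhds_of_eventually_within _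
      (by simpa using (continuous_ofReal.tendsto 0).mono_left nhdsWithin_le_nhds)
      (eventually_nhdsWithin_of_forall fun t ht => ofReal_ne_zero.2 ht)
  have h_comp : f ∘ e = g ∘ e :=
    (h_entire hf).eq_of_frequently_eq (h_entire hg) (h_ofReal.frequently (.of_forall hfg))
  intro x hx
  have hx_eq : e (log x / (2 * π * I)) = x := by
    simp only [e, mul_div_cancel₀ _ two_pi_I_ne_zero, exp_log hx]
  rw [← hx_eq]
  exact congrFun h_comp _

theorem eqOn_of_eq_on_torus {ι : Type*} [Fintype ι] [DecidableEq ι] {f g : (ι → ℂ) → E}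
    (hf : DifferentiableOn ℂ f {z | ∀ j, z j ≠ 0}) (hg : DifferentiableOn ℂ g {z | ∀ j, z j ≠ 0})
    (hfg : ∀ k : ι → ℝ, f (fun j => exp (2 * π * I * k j)) = g (fun j => exp (2 * π * I * k j))) :
    Set.EqOn f g {z | ∀ j, z j ≠ 0} := by
  suffices h : ∀ S : Finset ι, ∀ z : ι → ℂ, (∀ j, z j ≠ 0) →
      (∀ j ∉ S, ∃ t : ℝ, z j = exp (2 * π * I * t)) → f z = g z from
    fun z hz => h Finset.univ z hz (by simp)
  intro S
  induction S using Finset.induction_on with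
  | empty =>
    intro z _ hz
    choose k hk using fun j => hz j (Finset.notMem_empty j)
    rw [show z = _ from funext hk]
    exact hfg k
  | insert i S _ ih =>
    intro z hz hcirc
    have hupdate : ∀ x : ℂ, x ≠ 0 → ∀ j, Function.update z i x j ≠ 0 := by
      intro x hx j
      rcases eq_or_ne j i with rfl | hj
      · simpa using hx
      · simpa [hj] using hz j
    have hslice : ∀ {h : (ι → ℂ) → E}, DifferentiableOn ℂ h {z | ∀ j, z j ≠ 0} →
        DifferentiableOn ℂ (fun x => h (Function.update z i x)) {0}ᶜ :=
      fun hh => hh.comp (fun x _ => (hasFDerivAt_update z x).differentiableAt.differentiableWithinAt)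
        fun x hx => hupdate x hx
    have hcirc' : ∀ t : ℝ, ∀ j ∉ S, ∃ s : ℝ,
        Function.update z i (exp (2 * π * I * t)) j = exp (2 * π * I * s) := by
      intro t j hj
      rcases eq_or_ne j i with rfl | hji
      · exact ⟨t, by simp⟩
      · simpa [hji] using hcirc j (by simp [hji, hj])
    simpa using eqOn_compl_zero_of_eq_on_circle (hslice hf) (hslice hg)
      (fun t => ih _ (hupdate _ (exp_ne_zero _)) (hcirc' t)) (hz i)

end IdentityTheorem

namespace DPSO

theorem differentiableOn_det_floquetMat_sub {d : ℕ} (q : Fin d → ℕ) [∀ i, NeZero (q i)]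
    (V : (∀ i, ZMod (q i)) → ℂ) (lam : ℂ) :
    DifferentiableOn ℂ (fun z => (floquetMat q V z - lam • 1).det) {z | ∀ j, z j ≠ 0} := by
  intro z hz
  refine (DifferentiableAt.matrix_det fun n n' => ?_).differentiableWithinAt
  simp only [Matrix.sub_apply, Matrix.smul_apply, floquetMat]
  fun_prop (disch := exact hz _)

theorem stmt3_general {d : ℕ} (q : Fin d → ℕ) [∀ i, NeZero (q i)]
    (V Y : (∀ i, ZMod (q i)) → ℂ) :
    FloquetIso q V Y ↔
      ∀ z : Fin d → ℂ, (∀ j, z j ≠ 0) → ∀ lam : ℂ,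
        (floquetMat q V z - lam • 1).det = (floquetMat q Y z - lam • 1).det := by
  constructor
  · intro h z hz lam
    refine eqOn_of_eq_on_torus (differentiableOn_det_floquetMat_sub q V lam)
      (differentiableOn_det_floquetMat_sub q Y lam) (fun k => ?_) hz
    exact (Matrix.charpoly_eq_iff_forall_det_sub_smul_eq _ _).1 (h k) lam
  · intro h k
    exact (Matrix.charpoly_eq_iff_forall_det_sub_smul_eq _ _).2
      fun lam => h _ (fun j => exp_ne_zero _) lam

/-- `V` and `Y` are Floquet isospectral iff
`det(𝒟_V(z) − λI) = det(𝒟_Y(z) − λI)` for all `z ∈ (ℂ∖{0})^d` and all `λ ∈ ℂ`. -/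
theorem stmt3 {d : ℕ} (hd : 1 ≤ d) (q : Fin d → ℕ) [∀ i, NeZero (q i)]
    (V Y : (∀ i, ZMod (q i)) → ℂ) :
    FloquetIso q V Y ↔
      ∀ z : Fin d → ℂ, (∀ j, z j ≠ 0) → ∀ lam : ℂ,
        (floquetMat q V z - lam • 1).det = (floquetMat q Y z - lam • 1).det :=
  stmt3_general q V Y

end DPSO
end
end

section
/- For every Γ-periodic potential V : W → ℂ, every z = (z₁,…,z_d) ∈ (ℂ∖{0})^d and every λ ∈ ℂ, one has det(𝒟_V(z₁^{q₁}, z₂^{q₂}, …, z_d^{q_d}) − λI) = det(A(z) + B_V − λI). -/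
open scoped BigOperators

noncomputable section

namespace DPSO

/-!
The columns of the conjugating matrix are the Bloch waves `u_l(n) = ∏_j (z_j ρ^j_{l_j})^{n_j}`.
Moving one step in direction `j` multiplies `u_l` by `z_j ρ^j_{l_j}`, and at the boundary of the
fundamental domain the Floquet factor `z_j^{q_j}` exactly compensates for the wrap-around of
`n_j`; so the hopping part of `𝒟_V(z^q)` acts on `u_l` as the diagonal entry `A(z)(l, l)`.
Multiplication by `V` acts on the Bloch waves through the convolution matrix `B_V`, by Fourier
inversion. Hence `𝒟_V(z^q) U = U (A(z) + B_V)`, and `U` is invertible, being a diagonal matrix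
with entries `∏_j z_j^{n_j}` times the character matrix of `W`.
-/

open Finset

theorem mul_prod_eq_mul_prod_of_forall_ne {ι M : Type*} [Fintype ι] [DecidableEq ι]
    [CommMonoid M] {f g : ι → M} (j : ι) (hfg : ∀ i, i ≠ j → f i = g i) {a b : M}
    (hj : a * f j = b * g j) : a * ∏ i, f i = b * ∏ i, g i := by
  rw [← mul_prod_erase univ f (mem_univ j), ← mul_prod_erase univ g (mem_univ j),
    prod_congr rfl fun i hi => hfg i (ne_of_mem_erase hi), ← mul_assoc, hj, mul_assoc]

section ZModCoord
variable {N : ℕ} [NeZero N]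

theorem val_add_one_eq_ite (m : ZMod N) :
    (m + 1).val = if m.val = N - 1 then 0 else m.val + 1 := by
  have hm := m.val_lt
  rw [← ZMod.natCast_zmod_val m, ← Nat.cast_add_one, ZMod.val_natCast, ZMod.val_natCast,
    Nat.mod_eq_of_lt hm]
  split_ifs with h
  · rw [show m.val + 1 = N by omega, Nat.mod_self]
  · exact Nat.mod_eq_of_lt (by omega)

theorem val_add_one_eq_zero_iff (m : ZMod N) : (m + 1).val = 0 ↔ m.val = N - 1 := by
  rw [val_add_one_eq_ite]
  split_ifs <;> simpa

def blochCoord (z : ℂ) (m k : ZMod N) : ℂ := z ^ m.val * ZMod.stdAddChar (m * k)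

theorem blochCoord_add_one (z : ℂ) (m k : ZMod N) :
    (if m.val = N - 1 then z ^ N else 1) * blochCoord z (m + 1) k
      = (ZMod.stdAddChar k * z) * blochCoord z m k := by
  have hm := m.val_lt
  rw [blochCoord, blochCoord, add_one_mul, AddChar.map_add_eq_mul, val_add_one_eq_ite]
  split_ifs with h
  · have hN : z ^ N = z ^ m.val * z := by rw [← pow_succ]; congr 1; omega
    rw [hN]
    ring
  · ring

theorem blochCoord_add_one_inv {z : ℂ} (hz : z ≠ 0) (m k : ZMod N) :
    (if (m + 1).val = 0 then (z ^ N)⁻¹ else 1) * blochCoord z m k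
      = (ZMod.stdAddChar k * z)⁻¹ * blochCoord z (m + 1) k := by
  have h := blochCoord_add_one z m k
  have hk : ZMod.stdAddChar k ≠ 0 := Circle.coe_ne_zero _
  simp only [val_add_one_eq_zero_iff]
  split_ifs at h ⊢ <;>
  · field_simp
    linear_combination -h

theorem blochCoord_sub_one {z : ℂ} (hz : z ≠ 0) (m k : ZMod N) :
    (if m.val = 0 then (z ^ N)⁻¹ else 1) * blochCoord z (m - 1) k
      = (ZMod.stdAddChar k * z)⁻¹ * blochCoord z m k := by
  have h := blochCoord_add_one_inv hz (m - 1) k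
  rwa [sub_add_cancel] at h

end ZModCoord

section Pairing
variable {d : ℕ} (q : Fin d → ℕ) [∀ i, NeZero (q i)]

def stdPairing (n l : ∀ i, ZMod (q i)) : ℂ := ∏ j, ZMod.stdAddChar (n j * l j)

theorem prod_natCast_ne_zero : ∏ j, (q j : ℂ) ≠ 0 :=
  prod_ne_zero_iff.mpr fun _ _ => Nat.cast_ne_zero.mpr (NeZero.ne _)

theorem stdPairing_add_left (n n' l : ∀ i, ZMod (q i)) :
    stdPairing q (n + n') l = stdPairing q n l * stdPairing q n' l := by
  simp only [stdPairing, ← prod_mul_distrib, ← AddChar.map_add_eq_mul, Pi.add_apply, add_mul]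

theorem stdPairing_add_right (n l l' : ∀ i, ZMod (q i)) :
    stdPairing q n (l + l') = stdPairing q n l * stdPairing q n l' := by
  simp only [stdPairing, ← prod_mul_distrib, ← AddChar.map_add_eq_mul, Pi.add_apply, mul_add]

theorem sum_stdPairing (n : ∀ i, ZMod (q i)) :
    ∑ l, stdPairing q n l = if n = 0 then ∏ j, (q j : ℂ) else 0 := by
  simp only [stdPairing, mul_comm (n _)]
  rw [← Fintype.prod_sum fun j (m : ZMod (q j)) => ZMod.stdAddChar (m * n j)]
  simp only [AddChar.sum_mulShift _ (ZMod.isPrimitive_stdAddChar _), ZMod.card, Nat.cast_ite,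
    Nat.cast_zero, Fintype.prod_ite_zero]
  congr 1
  simp only [funext_iff, Pi.zero_apply]

theorem dft_eq_sum_stdPairing (V : (∀ i, ZMod (q i)) → ℂ) (k : ∀ i, ZMod (q i)) :
    dft q V k = (∏ j, (q j : ℂ))⁻¹ * ∑ m, V m * stdPairing q (-m) k := by
  rw [dft, one_div]
  congr 2 with m
  congr 1
  rw [stdPairing, mul_sum, Complex.exp_sum]
  refine prod_congr rfl fun j _ => ?_
  have hcast : -m j * k j = (((-(((k j).val * (m j).val : ℕ) : ℤ)) : ℤ) : ZMod (q j)) := by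
    push_cast [ZMod.natCast_zmod_val]
    ring
  rw [Pi.neg_apply, hcast, ZMod.stdAddChar_coe]
  congr 1
  push_cast
  ring

theorem sum_dft_mul_stdPairing (V : (∀ i, ZMod (q i)) → ℂ) (n : ∀ i, ZMod (q i)) :
    ∑ k, dft q V k * stdPairing q n k = V n := by
  simp only [dft_eq_sum_stdPairing, sum_mul, mul_assoc, ← mul_sum]
  rw [sum_comm]
  simp only [← mul_sum, ← stdPairing_add_left, sum_stdPairing, neg_add_eq_zero,
    mul_ite, mul_zero, sum_ite_eq', mem_univ, if_true]
  field_simp [prod_natCast_ne_zero q]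

theorem stdPairing_mul_stdPairing_neg :
    Matrix.of (stdPairing q) * Matrix.of (fun k m => stdPairing q (-m) k)
      = (∏ j, (q j : ℂ)) • (1 : Matrix (∀ i, ZMod (q i)) (∀ i, ZMod (q i)) ℂ) := by
  ext n m
  simp only [Matrix.mul_apply, Matrix.of_apply, mul_comm (stdPairing q n _),
    ← stdPairing_add_left, sum_stdPairing, Matrix.smul_apply, Matrix.one_apply, smul_eq_mul,
    mul_ite, mul_one, mul_zero, neg_add_eq_zero, eq_comm]

theorem isUnit_stdPairing : IsUnit (Matrix.of (stdPairing q)) := by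
  rw [Matrix.isUnit_iff_isUnit_det]
  refine Matrix.isUnit_det_of_right_inverse
    (B := (∏ j, (q j : ℂ))⁻¹ • Matrix.of fun k m => stdPairing q (-m) k) ?_
  rw [Matrix.mul_smul, stdPairing_mul_stdPairing_neg, smul_smul,
    inv_mul_cancel₀ (prod_natCast_ne_zero q), one_smul]

end Pairing

section Bloch
variable {d : ℕ} (q : Fin d → ℕ) [∀ i, NeZero (q i)]

/-- The matrix whose `l`-th column is the Bloch wave `n ↦ ∏_j (z_j ρ^j_{l_j})^{n_j}`. -/
def blochMat (z : Fin d → ℂ) : Matrix (∀ i, ZMod (q i)) (∀ i, ZMod (q i)) ℂ :=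
  Matrix.of fun n l => ∏ j, blochCoord (z j) (n j) (l j)

theorem blochMat_eq_diagonal_mul (z : Fin d → ℂ) :
    blochMat q z
      = Matrix.diagonal (fun n => ∏ j, z j ^ (n j).val) * Matrix.of (stdPairing q) := by
  ext n l
  simp only [blochMat, blochCoord, stdPairing, Matrix.diagonal_mul, Matrix.of_apply,
    prod_mul_distrib]

theorem isUnit_blochMat {z : Fin d → ℂ} (hz : ∀ j, z j ≠ 0) : IsUnit (blochMat q z) := by
  rw [blochMat_eq_diagonal_mul]
  refine (Matrix.isUnit_diagonal.mpr ?_).mul (isUnit_stdPairing q)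
  exact Pi.isUnit_iff.mpr fun n => (prod_ne_zero_iff.mpr fun j _ => pow_ne_zero _ (hz j)).isUnit

theorem blochMat_add_single (z : Fin d → ℂ) (n l : ∀ i, ZMod (q i)) (j : Fin d) :
    (if (n j).val = q j - 1 then z j ^ q j else 1) * blochMat q z (n + Pi.single j 1) l
      = (ZMod.stdAddChar (l j) * z j) * blochMat q z n l := by
  refine mul_prod_eq_mul_prod_of_forall_ne j (fun i hi => ?_) ?_
  · simp [Pi.single_eq_of_ne hi]
  · simpa using blochCoord_add_one (z j) (n j) (l j)

theorem blochMat_sub_single {z : Fin d → ℂ} (hz : ∀ j, z j ≠ 0) (n l : ∀ i, ZMod (q i))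
    (j : Fin d) :
    (if (n j).val = 0 then (z j ^ q j)⁻¹ else 1) * blochMat q z (n - Pi.single j 1) l
      = (ZMod.stdAddChar (l j) * z j)⁻¹ * blochMat q z n l := by
  refine mul_prod_eq_mul_prod_of_forall_ne j (fun i hi => ?_) ?_
  · simp [Pi.single_eq_of_ne hi]
  · simpa using blochCoord_sub_one (hz j) (n j) (l j)

theorem blochMat_mul_matB (V : (∀ i, ZMod (q i)) → ℂ) (z : Fin d → ℂ)
    (n l : ∀ i, ZMod (q i)) :
    (blochMat q z * matB q V) n l = V n * blochMat q z n l := by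
  rw [blochMat_eq_diagonal_mul, Matrix.mul_assoc, Matrix.diagonal_mul, Matrix.diagonal_mul,
    Matrix.mul_apply, ← Fintype.sum_equiv (Equiv.addRight l) (fun k => _) _ (fun k => rfl)]
  simp only [Matrix.of_apply, matB, Equiv.coe_addRight, add_sub_cancel_right,
    stdPairing_add_right]
  simp only [mul_right_comm _ (stdPairing q n l), ← sum_mul,
    mul_comm (stdPairing q n _) (dft q V _), sum_dft_mul_stdPairing]
  ring

end Bloch

section Floquet
variable {d : ℕ} (q : Fin d → ℕ) [∀ i, NeZero (q i)]

theorem floquetMat_mul_apply (V : (∀ i, ZMod (q i)) → ℂ) (z : Fin d → ℂ)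
    (M : Matrix (∀ i, ZMod (q i)) (∀ i, ZMod (q i)) ℂ) (n l : ∀ i, ZMod (q i)) :
    (floquetMat q V z * M) n l
      = ∑ j, ((if (n j).val = q j - 1 then z j else 1) * M (n + Pi.single j 1) l
          + (if (n j).val = 0 then (z j)⁻¹ else 1) * M (n - Pi.single j 1) l)
        + V n * M n l := by
  simp only [Matrix.mul_apply, floquetMat, add_mul, sum_mul, ite_mul, zero_mul]
  rw [sum_add_distrib, sum_comm]
  simp only [sum_add_distrib, sum_ite_eq', mem_univ, if_true]

theorem rho_val (j : Fin d) (m : ZMod (q j)) : rho q j m.val = ZMod.stdAddChar m := by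
  rw [rho, ZMod.stdAddChar_apply, ZMod.toCircle_apply]

theorem floquetMat_mul_blochMat (V : (∀ i, ZMod (q i)) → ℂ) {z : Fin d → ℂ}
    (hz : ∀ j, z j ≠ 0) :
    floquetMat q V (fun j => z j ^ q j) * blochMat q z
      = blochMat q z * (diagA q z + matB q V) := by
  ext n l
  rw [floquetMat_mul_apply, Matrix.mul_add, Matrix.add_apply, blochMat_mul_matB, diagA,
    Matrix.mul_diagonal]
  simp only [blochMat_add_single, blochMat_sub_single q hz, rho_val, mul_sum, ← add_mul]
  congr 1
  exact sum_congr rfl fun j _ => by ring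

end Floquet

theorem det_sub_smul_one_eq_of_mul_eq_mul {ι R : Type*} [Fintype ι] [DecidableEq ι]
    [CommRing R] {A B U : Matrix ι ι R} (hU : IsUnit U) (h : A * U = U * B) (c : R) :
    (A - c • 1).det = (B - c • 1).det := by
  have hc : (A - c • 1) * U = U * (B - c • 1) := by
    rw [Matrix.sub_mul, Matrix.mul_sub, h, Matrix.smul_mul, Matrix.mul_smul, Matrix.one_mul,
      Matrix.mul_one]
  have hdet := congrArg Matrix.det hc
  rw [Matrix.det_mul, Matrix.det_mul, mul_comm] at hdet
  exact ((Matrix.isUnit_iff_isUnit_det U).mp hU).mul_left_cancel hdet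

theorem stmt5_general {d : ℕ} (q : Fin d → ℕ) [∀ i, NeZero (q i)]
    (V : (∀ i, ZMod (q i)) → ℂ) :
    ∀ z : Fin d → ℂ, (∀ j, z j ≠ 0) → ∀ lam : ℂ,
      (floquetMat q V (fun j => (z j) ^ (q j)) - lam • 1).det
        = (diagA q z + matB q V - lam • 1).det := fun _z hz lam =>
  det_sub_smul_one_eq_of_mul_eq_mul (isUnit_blochMat q hz) (floquetMat_mul_blochMat q V hz) lam

/-- `det(𝒟_V(z₁^{q₁},…,z_d^{q_d}) − λI) = det(A(z) + B_V − λI)`. -/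
theorem stmt5 {d : ℕ} (hd : 1 ≤ d) (q : Fin d → ℕ) [∀ i, NeZero (q i)]
    (V : (∀ i, ZMod (q i)) → ℂ) :
    ∀ z : Fin d → ℂ, (∀ j, z j ≠ 0) → ∀ lam : ℂ,
      (floquetMat q V (fun j => (z j) ^ (q j)) - lam • 1).det
        = (diagA q z + matB q V - lam • 1).det :=
  stmt5_general q V

end DPSO
end
end

section
/- A function V : W → ℂ is (d₁,…,d_r) separable if and only if V̂(l) = 0 for every l ∈ W such that at least two of the block components l̃_1,…,l̃_r of l are nonzero (where l̃_j ∈ W_j denotes the j-th block of coordinates of l). -/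
open scoped BigOperators

noncomputable section

namespace DPSO

/-!
The characters of `W` are `e_l(n) = exp (2πi ∑ᵢ lᵢ nᵢ / qᵢ) = ∏ᵢ ψᵢ(lᵢ nᵢ)`, with `ψᵢ` the
standard character of `ℤ/qᵢℤ`, and `V̂(l)` is the coefficient of `e_l` in `V`. A function of the
`j`-th block alone is invariant under translation by a unit vector `eᵢ` outside block `j`, while
`e_{-l}(eᵢ) ≠ 1` once `lᵢ ≠ 0`; so its transform vanishes wherever `l` has a nonzero coordinate
outside block `j`, which is why separable potentials have `V̂(l) = 0` as soon as two blocks of `l`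
are nonzero. Conversely, Fourier inversion writes `V = ∑ₗ V̂(l) e_l`; if only frequencies supported
in a single block survive, grouping them by that block writes `V` as a sum of functions of one
block each.
-/

open Finset

section Characters

variable {ι : Type*} [Fintype ι] (q : ι → ℕ) [∀ i, NeZero (q i)]

def fourierChar (l : ∀ i, ZMod (q i)) : AddChar (∀ i, ZMod (q i)) ℂ where
  toFun n := ∏ i, ZMod.stdAddChar (l i * n i)
  map_zero_eq_one' := by simp
  map_add_eq_mul' n m := by simp [mul_add, AddChar.map_add_eq_mul, prod_mul_distrib]

lemma fourierChar_apply (l n : ∀ i, ZMod (q i)) :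
    fourierChar q l n = ∏ i, ZMod.stdAddChar (l i * n i) := rfl

lemma fourierChar_comm (l n : ∀ i, ZMod (q i)) : fourierChar q l n = fourierChar q n l := by
  simp only [fourierChar_apply, mul_comm]

lemma fourierChar_neg_apply (l n : ∀ i, ZMod (q i)) :
    fourierChar q (-l) n = fourierChar q l (-n) := by
  simp only [fourierChar_apply, Pi.neg_apply, neg_mul, mul_neg]

lemma fourierChar_single [DecidableEq ι] (l : ∀ i, ZMod (q i)) (i : ι) (a : ZMod (q i)) :
    fourierChar q l (Pi.single i a) = ZMod.stdAddChar (l i * a) := by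
  rw [fourierChar_apply, Fintype.prod_eq_single i fun j hj => by simp [hj]]
  simp

lemma fourierChar_single_one_ne_one [DecidableEq ι] {l : ∀ i, ZMod (q i)} {i : ι}
    (hl : l i ≠ 0) : fourierChar q l (Pi.single i 1) ≠ 1 := by
  rw [fourierChar_single, mul_one, ← AddChar.map_zero_eq_one (ZMod.stdAddChar (N := q i))]
  exact ZMod.injective_stdAddChar.ne hl

lemma fourierChar_eq_zero_iff {l : ∀ i, ZMod (q i)} : fourierChar q l = 0 ↔ l = 0 := by
  classical
  refine ⟨fun h => funext fun i => ?_, fun h => ?_⟩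
  · by_contra hl
    exact fourierChar_single_one_ne_one q hl (by rw [h, AddChar.zero_apply])
  · ext n
    simp [h, fourierChar_apply]

lemma exp_sum_eq_fourierChar (l n : ∀ i, ZMod (q i)) :
    Complex.exp (2 * Real.pi * Complex.I * ∑ i, ((l i).val : ℂ) * ((n i).val : ℂ) / (q i : ℂ))
      = fourierChar q l n := by
  rw [mul_sum, Complex.exp_sum, fourierChar_apply]
  refine prod_congr rfl fun i _ => ?_
  have : l i * n i = (((l i).val * (n i).val : ℕ) : ZMod (q i)) := by simp
  rw [this, ZMod.stdAddChar_apply, ZMod.toCircle_natCast]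
  push_cast
  ring_nf

end Characters

lemma sum_mul_addChar_eq_zero_of_add_invariant {G R : Type*} [AddGroup G] [Fintype G]
    [CommRing R] [IsDomain R] (f : G → R) (ψ : AddChar G R) {v : G} (hψ : ψ v ≠ 1)
    (hf : ∀ x, f (x + v) = f x) : ∑ x, f x * ψ x = 0 := by
  refine eq_zero_of_mul_eq_self_left hψ ?_
  rw [mul_sum]
  exact Fintype.sum_equiv (Equiv.addRight v) _ _ fun x => by
    simp only [Equiv.coe_addRight, hf, AddChar.map_add_eq_mul]
    ring

section DFT

variable {d : ℕ} (q : Fin d → ℕ) [∀ i, NeZero (q i)]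

lemma dft_eq_sum_fourierChar (V : (∀ i, ZMod (q i)) → ℂ) (l : ∀ i, ZMod (q i)) :
    dft q V l = (∏ i, (q i : ℂ))⁻¹ * ∑ n, V n * fourierChar q (-l) n := by
  rw [dft, one_div]
  congr 1
  refine sum_congr rfl fun n _ => ?_
  rw [fourierChar_neg_apply, AddChar.map_neg_eq_inv, ← exp_sum_eq_fourierChar, ← Complex.exp_neg,
    neg_mul]

lemma dft_sum {κ : Type*} (s : Finset κ) (V : κ → (∀ i, ZMod (q i)) → ℂ)
    (l : ∀ i, ZMod (q i)) : dft q (fun n => ∑ k ∈ s, V k n) l = ∑ k ∈ s, dft q (V k) l := by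
  simp only [dft_eq_sum_fourierChar, sum_mul, mul_sum]
  exact sum_comm

lemma sum_dft_mul_fourierChar (V : (∀ i, ZMod (q i)) → ℂ) (n : ∀ i, ZMod (q i)) :
    ∑ l, dft q V l * fourierChar q l n = V n := by
  classical
  have hQ : (∏ i, (q i : ℂ)) ≠ 0 := prod_ne_zero_iff.2 fun i _ => NeZero.ne _
  have hcard : (Fintype.card (∀ i, ZMod (q i)) : ℂ) = ∏ i, (q i : ℂ) := by
    simp [Fintype.card_pi, ZMod.card]
  calc ∑ l, dft q V l * fourierChar q l n
      = (∏ i, (q i : ℂ))⁻¹ * ∑ m, V m * ∑ l, fourierChar q (n - m) l := by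
        simp only [dft_eq_sum_fourierChar, mul_assoc, ← mul_sum, sum_mul]
        rw [sum_comm]
        refine congrArg _ (sum_congr rfl fun m _ => ?_)
        rw [mul_sum]
        refine sum_congr rfl fun l _ => ?_
        rw [fourierChar_neg_apply, fourierChar_comm q (n - m), sub_eq_neg_add,
          AddChar.map_add_eq_mul]
    _ = V n := by
        simp only [AddChar.sum_eq_ite, fourierChar_eq_zero_iff, hcard, sub_eq_zero, mul_ite,
          mul_zero, sum_ite_eq, mem_univ, if_true]
        field_simp

end DFT

section Blocks

variable {d r : ℕ} (ds : Fin r → ℕ) (hsum : ∑ m, ds m = d)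

def blockEquiv : (Σ j, Fin (ds j)) ≃ Fin d := finSigmaFinEquiv.trans (finCongr hsum)

lemma blockEquiv_mk (j : Fin r) (b : Fin (ds j)) :
    blockEquiv ds hsum ⟨j, b⟩ = blockEmb ds hsum j b := by
  ext
  simp only [blockEquiv, Equiv.trans_apply, finCongr_apply, Fin.val_cast, finSigmaFinEquiv_apply,
    blockEmb, blockOffset, add_left_inj]
  exact sum_bij (fun i _ => Fin.castLE j.2.le i)
    (fun i _ => mem_filter.2 ⟨mem_univ _, Fin.lt_def.2 i.2⟩)
    (fun _ _ _ _ h => Fin.castLE_injective _ h)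
    (fun m hm => ⟨⟨m, Fin.lt_def.1 (mem_filter.1 hm).2⟩, mem_univ _, rfl⟩)
    (fun _ _ => rfl)

def blockOf (i : Fin d) : Fin r := ((blockEquiv ds hsum).symm i).1

lemma blockOf_blockEmb (j : Fin r) (b : Fin (ds j)) :
    blockOf ds hsum (blockEmb ds hsum j b) = j := by
  rw [blockOf, ← blockEquiv_mk, Equiv.symm_apply_apply]

lemma exists_blockEmb_blockOf (i : Fin d) : ∃ b, blockEmb ds hsum (blockOf ds hsum i) b = i :=
  ⟨((blockEquiv ds hsum).symm i).2,
    (blockEquiv_mk ds hsum _ _).symm.trans (Equiv.apply_symm_apply _ _)⟩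

lemma blockEmb_injective (j : Fin r) : Function.Injective (blockEmb ds hsum j) := fun b b' h => by
  rw [← blockEquiv_mk, ← blockEquiv_mk] at h
  exact eq_of_heq (Sigma.mk.inj_iff.1 ((blockEquiv ds hsum).injective h)).2

lemma blockEmb_ne_of_ne {j j' : Fin r} (h : j ≠ j') (b : Fin (ds j)) (b' : Fin (ds j')) :
    blockEmb ds hsum j b ≠ blockEmb ds hsum j' b' := fun he => h <| by
  simpa only [blockOf_blockEmb] using congrArg (blockOf ds hsum) he

end Blocks

section Separable

variable {d r : ℕ} (ds : Fin r → ℕ) (hsum : ∑ m, ds m = d)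

open Classical in
def leadBlock {M : Fin d → Type*} [∀ i, Zero (M i)] (j₀ : Fin r) (l : ∀ i, M i) : Fin r :=
  if h : ∃ i, l i ≠ 0 then blockOf ds hsum h.choose else j₀

lemma blockOf_eq_leadBlock {M : Fin d → Type*} [∀ i, Zero (M i)] (j₀ : Fin r) {l : ∀ i, M i}
    (hl : ¬ ∃ j j' : Fin r, j ≠ j' ∧ (∃ b, l (blockEmb ds hsum j b) ≠ 0)
      ∧ ∃ b, l (blockEmb ds hsum j' b) ≠ 0)
    {i : Fin d} (hi : l i ≠ 0) : blockOf ds hsum i = leadBlock ds hsum j₀ l := by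
  have h : ∃ i, l i ≠ 0 := ⟨i, hi⟩
  rw [leadBlock, dif_pos h]
  by_contra hne
  obtain ⟨b, hb⟩ := exists_blockEmb_blockOf ds hsum i
  obtain ⟨b', hb'⟩ := exists_blockEmb_blockOf ds hsum h.choose
  exact hl ⟨_, _, hne, ⟨b, by rwa [hb]⟩, ⟨b', by rw [hb']; exact h.choose_spec⟩⟩

variable (q : Fin d → ℕ) [∀ i, NeZero (q i)]

lemma fourierChar_eq_prod_blockEmb {j : Fin r} {l : ∀ i, ZMod (q i)}
    (hl : ∀ i, l i ≠ 0 → blockOf ds hsum i = j) (n : ∀ i, ZMod (q i)) :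
    fourierChar q l n
      = ∏ b, ZMod.stdAddChar (l (blockEmb ds hsum j b) * n (blockEmb ds hsum j b)) := by
  refine (Fintype.prod_of_injective _ (blockEmb_injective ds hsum j) _ _ (fun i hi => ?_)
    fun _ => rfl).symm
  by_contra h
  have hj := hl i fun h0 => h (by simp [h0])
  subst hj
  obtain ⟨b, hb⟩ := exists_blockEmb_blockOf ds hsum i
  exact hi ⟨b, hb⟩

lemma dft_comp_blockEmb_eq_zero {j j' : Fin r} (hj : j' ≠ j)
    (F : (∀ b : Fin (ds j), ZMod (q (blockEmb ds hsum j b))) → ℂ) {l : ∀ i, ZMod (q i)}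
    {b' : Fin (ds j')} (hl : l (blockEmb ds hsum j' b') ≠ 0) :
    dft q (fun n => F fun b => n (blockEmb ds hsum j b)) l = 0 := by
  classical
  rw [dft_eq_sum_fourierChar, sum_mul_addChar_eq_zero_of_add_invariant _ _
    (fourierChar_single_one_ne_one q (neg_ne_zero.2 hl)), mul_zero]
  intro n
  congr 1
  funext b
  rw [Pi.add_apply, Pi.single_eq_of_ne (blockEmb_ne_of_ne ds hsum hj.symm b b'), add_zero]

lemma IsSeparable.dft_eq_zero {V : (∀ i, ZMod (q i)) → ℂ} (hV : IsSeparable q ds hsum V)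
    {l : ∀ i, ZMod (q i)} {j₁ j₂ : Fin r} (hne : j₁ ≠ j₂) {b₁ : Fin (ds j₁)} {b₂ : Fin (ds j₂)}
    (h₁ : l (blockEmb ds hsum j₁ b₁) ≠ 0) (h₂ : l (blockEmb ds hsum j₂ b₂) ≠ 0) :
    dft q V l = 0 := by
  obtain ⟨F, hF⟩ := hV
  rw [show V = fun n => ∑ j, F j fun b => n (blockEmb ds hsum j b) from funext hF, dft_sum]
  refine sum_eq_zero fun j _ => ?_
  by_cases hj : j₁ = j
  · exact dft_comp_blockEmb_eq_zero ds hsum q (hj ▸ hne.symm) (F j) h₂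
  · exact dft_comp_blockEmb_eq_zero ds hsum q hj (F j) h₁

lemma isSeparable_of_dft_eq_zero (j₀ : Fin r) {V : (∀ i, ZMod (q i)) → ℂ}
    (hV : ∀ l : ∀ i, ZMod (q i), (∃ j j' : Fin r, j ≠ j' ∧ (∃ b, l (blockEmb ds hsum j b) ≠ 0)
      ∧ ∃ b, l (blockEmb ds hsum j' b) ≠ 0) → dft q V l = 0) :
    IsSeparable q ds hsum V := by
  classical
  refine ⟨fun j x => ∑ l with leadBlock ds hsum j₀ l = j,
    dft q V l * ∏ b, ZMod.stdAddChar (l (blockEmb ds hsum j b) * x b), fun n => ?_⟩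
  rw [← sum_dft_mul_fourierChar q V n, ← sum_fiberwise univ (leadBlock ds hsum j₀)]
  refine sum_congr rfl fun j _ => sum_congr rfl fun l hl => ?_
  by_cases h : dft q V l = 0
  · simp [h]
  · rw [fourierChar_eq_prod_blockEmb ds hsum q fun i hi => ?_]
    rw [blockOf_eq_leadBlock ds hsum j₀ (mt (hV l) h) hi]
    exact (mem_filter.1 hl).2

end Separable

theorem stmt6_general {d r : ℕ} (hr : 2 ≤ r)
    (q : Fin d → ℕ) [∀ i, NeZero (q i)]
    (ds : Fin r → ℕ) (hsum : ∑ m, ds m = d)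
    (V : (∀ i, ZMod (q i)) → ℂ) :
    IsSeparable q ds hsum V ↔
      ∀ l : ∀ i, ZMod (q i),
        (∃ j j' : Fin r, j ≠ j' ∧ (∃ b, l (blockEmb ds hsum j b) ≠ 0)
          ∧ (∃ b, l (blockEmb ds hsum j' b) ≠ 0)) →
        dft q V l = 0 :=
  ⟨fun hV _ ⟨_, _, hne, ⟨_, h₁⟩, ⟨_, h₂⟩⟩ => hV.dft_eq_zero ds hsum q hne h₁ h₂,
    isSeparable_of_dft_eq_zero ds hsum q ⟨0, by omega⟩⟩

/-- `V` is `(d₁,…,d_r)` separable iff `V̂(l) = 0` for every `l` having at least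
two nonzero block components. -/
theorem stmt6 {d r : ℕ} (hd : 1 ≤ d) (hr : 2 ≤ r)
    (q : Fin d → ℕ) [∀ i, NeZero (q i)]
    (ds : Fin r → ℕ) (hds : ∀ j, 1 ≤ ds j) (hsum : ∑ m, ds m = d)
    (V : (∀ i, ZMod (q i)) → ℂ) :
    IsSeparable q ds hsum V ↔
      ∀ l : ∀ i, ZMod (q i),
        (∃ j j' : Fin r, j ≠ j' ∧ (∃ b, l (blockEmb ds hsum j b) ≠ 0)
          ∧ (∃ b, l (blockEmb ds hsum j' b) ≠ 0)) →
        dft q V l = 0 :=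
  stmt6_general hr q ds hsum V

end DPSO
end
end

section
/- Let V, Y : W → ℝ be real-valued Γ-periodic potentials that are Floquet isospectral. Then Σ_{l∈W} |V̂(l)|² = Σ_{l∈W} |Ŷ(l)|². -/
open scoped BigOperators

noncomputable section

/-!
At quasimomentum `k = 0` the Floquet matrix is `H₀ + diag V`, where `H₀ = 𝒟₀(1)` is Hermitian and
invariant under translations of `W`, so its diagonal is constant. Equal characteristic polynomials
give equal traces of `H` and of `H²` (the latter through the eigenvalues of the Hermitian matrix
`H`), hence `Σ V = Σ Y` and then `Σ V² = Σ Y²`. Orthogonality of the characters of `W` gives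
Parseval's identity `Σ |V̂|² = Q⁻¹ Σ |V|²`, and `|V|² = V²` because `V` is real.
-/

namespace Matrix

variable {𝕜 n : Type*} [RCLike 𝕜] [Fintype n] [DecidableEq n]

namespace IsHermitian

variable {A B : Matrix n n 𝕜}

lemma trace_mul_self_eq_sum_eigenvalues_sq (hA : A.IsHermitian) :
    (A * A).trace = ∑ i, (hA.eigenvalues i : 𝕜) ^ 2 := by
  conv_lhs => rw [hA.spectral_theorem, ← map_mul, Unitary.conjStarAlgAut_apply]
  rw [trace_mul_cycle, Unitary.coe_star_mul_self, one_mul, diagonal_mul_diagonal, trace_diagonal]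
  simp [sq]

lemma trace_mul_self_eq_of_charpoly_eq (hA : A.IsHermitian) (hB : B.IsHermitian)
    (h : A.charpoly = B.charpoly) : (A * A).trace = (B * B).trace := by
  rw [hA.trace_mul_self_eq_sum_eigenvalues_sq, hB.trace_mul_self_eq_sum_eigenvalues_sq,
    (hA.eigenvalues_eq_eigenvalues_iff hB).2 h]

end IsHermitian

lemma trace_add_diagonal_mul_self {R : Type*} [CommRing R] {A : Matrix n n R} {c : R}
    (hA : ∀ i, A i i = c) (v : n → R) :
    ((A + diagonal v) * (A + diagonal v)).trace
      = (A * A).trace + 2 * c * ∑ i, v i + ∑ i, v i ^ 2 := by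
  have hAD : (A * diagonal v).trace = c * ∑ i, v i := by
    simp [trace, mul_diagonal, hA, Finset.mul_sum]
  rw [add_mul, mul_add, mul_add, trace_add, trace_add, trace_add, trace_mul_comm (diagonal v),
    hAD, diagonal_mul_diagonal, trace_diagonal]
  simp only [sq]
  ring

lemma sum_sq_eq_of_charpoly_add_diagonal_eq {A : Matrix n n 𝕜} (hA : A.IsHermitian) {c : 𝕜}
    (hc : ∀ i, A i i = c) {v w : n → ℝ}
    (h : (A + diagonal fun i => (v i : 𝕜)).charpoly
      = (A + diagonal fun i => (w i : 𝕜)).charpoly) :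
    ∑ i, v i ^ 2 = ∑ i, w i ^ 2 := by
  have hherm (u : n → ℝ) : (A + diagonal fun i => (u i : 𝕜)).IsHermitian :=
    hA.add (isHermitian_diagonal_of_self_adjoint _ (by ext; simp))
  have hsum : ∑ i, (v i : 𝕜) = ∑ i, (w i : 𝕜) := by
    have htrace := congrArg (fun p => -p.nextCoeff) h
    simpa only [← trace_eq_neg_charpoly_nextCoeff, trace_add, trace_diagonal, add_right_inj]
      using htrace
  have htrace_sq := (hherm v).trace_mul_self_eq_of_charpoly_eq (hherm w) h
  rw [trace_add_diagonal_mul_self hc, trace_add_diagonal_mul_self hc, hsum,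
    add_right_inj] at htrace_sq
  exact_mod_cast htrace_sq

end Matrix

namespace DPSO

section

variable {d : ℕ} (q : Fin d → ℕ) [∀ i, NeZero (q i)]

lemma floquetMat_eq_add_diagonal (V : (∀ i, ZMod (q i)) → ℂ) (z : Fin d → ℂ) :
    floquetMat q V z = floquetMat q 0 z + Matrix.diagonal V := by
  ext n n'
  by_cases h : n' = n
  · subst h; simp [floquetMat]
  · simp [floquetMat, h, Ne.symm h]

lemma floquetMat_zero_one_apply (n n' : ∀ i, ZMod (q i)) :
    floquetMat q 0 1 n n' = ∑ j, ((if n' = n + Pi.single j 1 then 1 else 0)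
      + (if n' = n - Pi.single j 1 then 1 else 0)) := by
  simp [floquetMat]

lemma floquetMat_zero_one_add_add (n n' a : ∀ i, ZMod (q i)) :
    floquetMat q 0 1 (n + a) (n' + a) = floquetMat q 0 1 n n' := by
  simp only [floquetMat_zero_one_apply, add_right_comm n a, add_sub_right_comm n a, add_left_inj]

lemma floquetMat_zero_one_apply_self (n : ∀ i, ZMod (q i)) :
    floquetMat q 0 1 n n = floquetMat q 0 1 0 0 := by
  simpa using floquetMat_zero_one_add_add q 0 0 n

lemma floquetMat_zero_one_isHermitian : (floquetMat q 0 1).IsHermitian := by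
  ext n n'
  have hadd (e : ∀ i, ZMod (q i)) : n = n' + e ↔ n' = n - e := by
    rw [eq_sub_iff_add_eq, eq_comm]
  have hsub (e : ∀ i, ZMod (q i)) : n = n' - e ↔ n' = n + e := by
    rw [eq_sub_iff_add_eq, eq_comm]
  simp only [Matrix.conjTranspose_apply, floquetMat_zero_one_apply, star_sum, star_add,
    apply_ite star, star_one, star_zero, hadd, hsub, add_comm]

open ZMod ComplexConjugate

def dftKernel (l n : ∀ i, ZMod (q i)) : ℂ :=
  ∏ j, stdAddChar (-(l j * n j))

lemma dft_eq_sum_dftKernel (V : (∀ i, ZMod (q i)) → ℂ) (l : ∀ i, ZMod (q i)) :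
    dft q V l = (∏ i, (q i : ℂ))⁻¹ * ∑ n, V n * dftKernel q l n := by
  rw [dft, one_div]
  congr 1
  refine Finset.sum_congr rfl fun n _ => ?_
  rw [Finset.mul_sum, Complex.exp_sum, dftKernel]
  congr 1
  refine Finset.prod_congr rfl fun j _ => ?_
  have hcast : -(l j * n j) = ((-((l j).val * (n j).val : ℕ) : ℤ) : ZMod (q j)) := by
    push_cast [natCast_zmod_val]; rfl
  rw [hcast, stdAddChar_coe]
  congr 1
  push_cast
  ring

lemma sum_dftKernel_mul_conj (n m : ∀ i, ZMod (q i)) :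
    ∑ l : ∀ i, ZMod (q i), dftKernel q l n * conj (dftKernel q l m)
      = if n = m then ∏ j, (q j : ℂ) else 0 := by
  have hchar (l : ∀ i, ZMod (q i)) :
      dftKernel q l n * conj (dftKernel q l m) = ∏ j, stdAddChar (l j * (m j - n j)) := by
    rw [dftKernel, dftKernel, map_prod, ← Finset.prod_mul_distrib]
    refine Finset.prod_congr rfl fun j _ => ?_
    rw [← AddChar.map_neg_eq_conj, ← AddChar.map_add_eq_mul, mul_sub, neg_neg, neg_add_eq_sub]
  simp_rw [hchar]
  rw [← Fintype.piFinset_univ, ← Finset.prod_univ_sum (fun j => (Finset.univ : Finset (ZMod (q j))))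
    fun j x => stdAddChar (x * (m j - n j))]
  simp_rw [AddChar.sum_mulShift _ (isPrimitive_stdAddChar _), ZMod.card, Nat.cast_ite,
    Nat.cast_zero, Fintype.prod_ite_zero, sub_eq_zero, ← funext_iff, eq_comm (a := m)]

lemma sum_normSq_dft (V : (∀ i, ZMod (q i)) → ℂ) :
    ∑ l, Complex.normSq (dft q V l) = (∑ n, Complex.normSq (V n)) / ∏ i, (q i : ℝ) := by
  apply Complex.ofReal_injective
  push_cast
  simp only [← Complex.mul_conj]
  simp only [dft_eq_sum_dftKernel, map_mul, map_sum, map_inv₀]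
  set K := dftKernel q
  set Q : ℂ := ∏ i, (q i : ℂ)
  have hQ : Q ≠ 0 := Finset.prod_ne_zero_iff.2 fun i _ => Nat.cast_ne_zero.2 (NeZero.ne (q i))
  have hQc : conj Q = Q := by simp [Q]
  simp only [hQc]
  calc ∑ l, Q⁻¹ * (∑ n, V n * K l n) * (Q⁻¹ * ∑ m, conj (V m) * conj (K l m))
      = Q⁻¹ * Q⁻¹ * ∑ n, ∑ m, V n * conj (V m) * ∑ l, K l n * conj (K l m) := by
        simp_rw [Finset.mul_sum, Finset.sum_mul]
        rw [Finset.sum_comm_cycle]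
        refine Finset.sum_congr rfl fun n _ => ?_
        rw [Finset.sum_comm]
        refine Finset.sum_congr rfl fun m _ => Finset.sum_congr rfl fun l _ => ?_
        ring
    _ = Q⁻¹ * Q⁻¹ * ∑ n, V n * conj (V n) * Q := by
        simp_rw [K, sum_dftKernel_mul_conj, mul_ite, mul_zero, Finset.sum_ite_eq,
          Finset.mem_univ, if_true]
        rfl
    _ = (∑ n, V n * conj (V n)) / Q := by
        rw [← Finset.sum_mul]
        field_simp

end

theorem stmt9_general {d : ℕ} (q : Fin d → ℕ) [∀ i, NeZero (q i)]
    (V Y : (∀ i, ZMod (q i)) → ℝ)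
    (hiso : FloquetIso q (fun n => (V n : ℂ)) (fun n => (Y n : ℂ))) :
    ∑ l : ∀ i, ZMod (q i), Complex.normSq (dft q (fun m => (V m : ℂ)) l)
      = ∑ l : ∀ i, ZMod (q i), Complex.normSq (dft q (fun m => (Y m : ℂ)) l) := by
  have hcharpoly := hiso 0
  simp only [Pi.zero_apply, Complex.ofReal_zero, mul_zero, Complex.exp_zero] at hcharpoly
  rw [floquetMat_eq_add_diagonal, floquetMat_eq_add_diagonal q (fun n => (Y n : ℂ))] at hcharpoly
  have hsq := Matrix.sum_sq_eq_of_charpoly_add_diagonal_eq (floquetMat_zero_one_isHermitian q)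
    (floquetMat_zero_one_apply_self q) hcharpoly
  simp only [sum_normSq_dft, Complex.normSq_ofReal, ← sq, hsq]

/-- For real-valued Floquet isospectral potentials,
`Σ_{l∈W} |V̂(l)|² = Σ_{l∈W} |Ŷ(l)|²`. -/
theorem stmt9 {d : ℕ} (hd : 1 ≤ d) (q : Fin d → ℕ) [∀ i, NeZero (q i)]
    (V Y : (∀ i, ZMod (q i)) → ℝ)
    (hiso : FloquetIso q (fun n => (V n : ℂ)) (fun n => (Y n : ℂ))) :
    ∑ l : ∀ i, ZMod (q i), Complex.normSq (dft q (fun m => (V m : ℂ)) l)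
      = ∑ l : ∀ i, ZMod (q i), Complex.normSq (dft q (fun m => (Y m : ℂ)) l) :=
  stmt9_general q V Y hiso

end DPSO
end
end
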